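/- Let X(t) = [[x₁+ix₂, x₃-ix₄],[x₃+ix₄, x₁-ix₂]] solve X'(t) = (K̄x + u(t)K̄z)X(t) with X(0) = I and |u(t)| ≤ 1 for all t. Then (x₁(t)-x₄(t))² - (x₂(t)-x₃(t))² ≤ 1 for all t ≥ 0; consequently the reachable set of this system is a proper subset of SU(1,1). -/

import Mathlib

/-! With `a = x₁ - x₄` and `b = x₂ - x₃` the system closes on the pair `(a, b)`:
`a' = (u b - a)/2`, `b' = (b - u a)/2`. Hence
`(a² - b²)' = 2uab - a² - b² = -(1 - u²) a² - (u a - b)² ≤ 0` whenever `|u| ≤ 1`,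
so `a² - b²` never exceeds its initial value `1`. -/

lemma two_mul_mul_mul_le_sq_add_sq {u : ℝ} (hu : |u| ≤ 1) (a b : ℝ) :
    2 * u * a * b ≤ a ^ 2 + b ^ 2 := by
  have hu2 : u ^ 2 ≤ 1 := (sq_le_one_iff_abs_le_one u).mpr hu
  nlinarith [mul_nonneg (sub_nonneg.mpr hu2) (sq_nonneg a), sq_nonneg (u * a - b)]

lemma antitone_sq_sub_sq_of_hasDerivAt {u a b : ℝ → ℝ} (hu : ∀ t, |u t| ≤ 1)
    (ha : ∀ t, HasDerivAt a ((u t * b t - a t) / 2) t)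
    (hb : ∀ t, HasDerivAt b ((b t - u t * a t) / 2) t) :
    Antitone fun t => a t ^ 2 - b t ^ 2 := by
  have hV : ∀ t, HasDerivAt (fun t => a t ^ 2 - b t ^ 2)
      (2 * u t * a t * b t - a t ^ 2 - b t ^ 2) t := fun t => by
    refine (((ha t).fun_pow 2).fun_sub ((hb t).fun_pow 2)).congr_deriv ?_
    push_cast
    ring
  refine antitone_of_deriv_nonpos (fun t => (hV t).differentiableAt) fun t => ?_
  rw [(hV t).deriv]
  linarith [two_mul_mul_mul_le_sq_add_sq (hu t) (a t) (b t)]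

theorem stmt14 (u x₁ x₂ x₃ x₄ : ℝ → ℝ)
    (hu : ∀ t, |u t| ≤ 1)
    (h₁ : ∀ t, HasDerivAt x₁ ((u t * x₂ t + x₄ t) / 2) t)
    (h₂ : ∀ t, HasDerivAt x₂ ((-(u t * x₁ t) - x₃ t) / 2) t)
    (h₃ : ∀ t, HasDerivAt x₃ ((-(u t * x₄ t) - x₂ t) / 2) t)
    (h₄ : ∀ t, HasDerivAt x₄ ((u t * x₃ t + x₁ t) / 2) t)
    (hinit : x₁ 0 = 1 ∧ x₂ 0 = 0 ∧ x₃ 0 = 0 ∧ x₄ 0 = 0) :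
    ∀ t ≥ 0, (x₁ t - x₄ t)^2 - (x₂ t - x₃ t)^2 ≤ 1 := by
  have ha : ∀ t, HasDerivAt (fun t => x₁ t - x₄ t)
      ((u t * (x₂ t - x₃ t) - (x₁ t - x₄ t)) / 2) t := fun t => by
    refine ((h₁ t).fun_sub (h₄ t)).congr_deriv ?_
    ring
  have hb : ∀ t, HasDerivAt (fun t => x₂ t - x₃ t)
      ((x₂ t - x₃ t - u t * (x₁ t - x₄ t)) / 2) t := fun t => by
    refine ((h₂ t).fun_sub (h₃ t)).congr_deriv ?_
    ring
  intro t ht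
  obtain ⟨e₁, e₂, e₃, e₄⟩ := hinit
  calc (x₁ t - x₄ t)^2 - (x₂ t - x₃ t)^2
      ≤ (x₁ 0 - x₄ 0)^2 - (x₂ 0 - x₃ 0)^2 := antitone_sq_sub_sq_of_hasDerivAt hu ha hb ht
    _ = 1 := by simp [e₁, e₂, e₃, e₄]
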